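/- Let κ > 0, let μ be a finite (positive) measure on ℝ³ with compact support and w: ℝ³ → ℝ³ a bounded measurable vector field. Then the double layer potential u(x) = ∫ ⟨w(y), ∇_y G(x,y)⟩ dμ(y) satisfies the Sommerfeld radiation condition: with r = ‖x‖₂, r·( ⟨x/‖x‖₂, ∇u(x)⟩ − iκ u(x) ) → 0 as ‖x‖₂ → ∞. -/

import Mathlib

open MeasureTheory

/-- The fundamental solution `G(x,y) = e^{iκ‖x−y‖}/(4π‖x−y‖)` of the Helmholtz equation. -/
noncomputable def helmholtzG (κ : ℝ) (x y : EuclideanSpace ℝ (Fin 3)) : ℂ :=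
  Complex.exp (Complex.I * (κ : ℂ) * (‖x - y‖ : ℂ)) / (4 * (Real.pi : ℂ) * (‖x - y‖ : ℂ))

/-!
Write `ρ = ‖x - y‖` and `p = w y`. The integrand is `-q(ρ) ⟪x - y, p⟫` with
`q(ρ) = (iκρ - 1) e^{iκρ} / (4πρ³)`; both `q` and `q'` are `O(ρ⁻²)`, but the Sommerfeld
combination `iκq - q'` is `O(ρ⁻³)`. With `x̂ = x / ‖x‖`, the radial derivative of the integrand
minus `iκ` times the integrand is
`⟪x - y, p⟫ (iκq - q') + ⟪x - y, p⟫ q' (ρ - ⟪x - y, x̂⟫) / ρ - q ⟪p, x̂⟫`,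
and `ρ (ρ - ⟪x - y, x̂⟫) ≤ ‖y‖²`, so for `y` in a fixed ball every term is `O(‖x‖⁻²)` uniformly
in `y`. Differentiating under the integral sign gives `∂ᵣu - iκu = O(r⁻²)`, hence
`r (∂ᵣu - iκu) = O(r⁻¹) → 0`.
-/

open Real Filter Topology RealInnerProductSpace
open scoped Complex

section NormedSpace

variable {E : Type*} [NormedAddCommGroup E]

theorem le_norm_sub_of_norm_le {x y : E} {r R : ℝ} (hy : ‖y‖ ≤ R) (hx : R + r ≤ ‖x‖) :
    r ≤ ‖x - y‖ := by
  linarith [norm_sub_norm_le x y]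

variable [InnerProductSpace ℝ E]

theorem hasFDerivAt_norm {x : E} (hx : x ≠ 0) :
    HasFDerivAt (fun y : E => ‖y‖) (‖x‖⁻¹ • innerSL ℝ x) x := by
  have h := (hasStrictFDerivAt_norm_sq x).hasFDerivAt.sqrt (by simpa using hx)
  simp only [Real.sqrt_sq (norm_nonneg _)] at h
  convert h using 1
  ext v
  simp only [smul_apply, coe_innerSL_apply, smul_eq_mul, nsmul_eq_mul,
    Nat.cast_ofNat]
  field_simp

-- With `t = ⟪y, x̂⟫`: `⟪x - y, x̂⟫ = ‖x‖ - t` and `‖x - y‖² - (‖x‖ - t)² = ‖y‖² - t²`.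
theorem norm_sub_mul_sub_inner_le_sq {x y : E} (hyx : ‖y‖ ≤ ‖x‖) :
    ‖x - y‖ * (‖x - y‖ - ⟪x - y, ‖x‖⁻¹ • x⟫) ≤ ‖y‖ ^ 2 := by
  rcases eq_or_ne x 0 with rfl | hx
  · simp [norm_le_zero_iff.1 (by simpa using hyx)]
  have hs : ⟪x - y, ‖x‖⁻¹ • x⟫ = ‖x‖ - ⟪y, ‖x‖⁻¹ • x⟫ := by
    rw [inner_sub_left, real_inner_smul_right, real_inner_self_eq_norm_sq]
    field_simp [norm_ne_zero_iff.2 hx]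
  have hxy : ⟪x, y⟫ = ‖x‖ * ⟪y, ‖x‖⁻¹ • x⟫ := by
    rw [real_inner_smul_right, real_inner_comm]
    field_simp [norm_ne_zero_iff.2 hx]
  have ht : |⟪y, ‖x‖⁻¹ • x⟫| ≤ ‖y‖ :=
    (abs_real_inner_le_norm _ _).trans <| by
      rw [norm_smul, norm_inv, norm_norm, inv_mul_cancel₀ (norm_ne_zero_iff.2 hx), mul_one]
  have hρ := norm_sub_sq_real x y
  rw [hs]
  rw [hxy] at hρ
  generalize ⟪y, ‖x‖⁻¹ • x⟫ = t at *
  have ht2 : t ^ 2 ≤ ‖y‖ ^ 2 := by simpa using pow_le_pow_left₀ (abs_nonneg t) ht 2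
  have hs0 : 0 ≤ ‖x‖ - t := by linarith [le_abs_self t]
  have hsρ : ‖x‖ - t ≤ ‖x - y‖ :=
    pow_le_pow_iff_left₀ hs0 (norm_nonneg _) two_ne_zero |>.1 (by nlinarith)
  nlinarith [norm_nonneg (x - y)]

end NormedSpace

noncomputable section

namespace Helmholtz

/-- `G(x, y) = profile κ ‖x - y‖`. -/
def profile (κ ρ : ℝ) : ℂ := cexp (Complex.I * κ * ρ) / (4 * π * ρ)

/-- `∇ₓG(x, y) = gradCoeff κ ‖x - y‖ • (x - y)`. -/
def gradCoeff (κ ρ : ℝ) : ℂ :=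
  (Complex.I * κ * ρ - 1) * cexp (Complex.I * κ * ρ) / (4 * π * ρ ^ 3)

def gradCoeffDeriv (κ ρ : ℝ) : ℂ :=
  (-κ ^ 2 * ρ ^ 2 - 3 * Complex.I * κ * ρ + 3) * cexp (Complex.I * κ * ρ) / (4 * π * ρ ^ 4)

theorem hasDerivAt_cexp_I_mul (κ ρ : ℝ) :
    HasDerivAt (fun t : ℝ => cexp (Complex.I * κ * t))
      (Complex.I * κ * cexp (Complex.I * κ * ρ)) ρ := by
  simpa [mul_comm] using (((hasDerivAt_id ρ).ofReal_comp).const_mul (Complex.I * κ)).cexp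

theorem hasDerivAt_profile (κ : ℝ) {ρ : ℝ} (hρ : ρ ≠ 0) :
    HasDerivAt (profile κ) (ρ * gradCoeff κ ρ) ρ := by
  have hden : HasDerivAt (fun t : ℝ => 4 * (π : ℂ) * t) (4 * π) ρ := by
    simpa using ((hasDerivAt_id ρ).ofReal_comp).const_mul (4 * (π : ℂ))
  refine ((hasDerivAt_cexp_I_mul κ ρ).div hden (by simp [hρ, Real.pi_ne_zero])).congr_deriv ?_
  simp only [gradCoeff]
  field_simp

theorem hasDerivAt_gradCoeff (κ : ℝ) {ρ : ℝ} (hρ : ρ ≠ 0) :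
    HasDerivAt (gradCoeff κ) (gradCoeffDeriv κ ρ) ρ := by
  have hlin : HasDerivAt (fun t : ℝ => Complex.I * κ * t - 1) (Complex.I * κ) ρ := by
    simpa using (((hasDerivAt_id ρ).ofReal_comp).const_mul (Complex.I * κ)).sub_const 1
  have hden : HasDerivAt (fun t : ℝ => 4 * (π : ℂ) * (t : ℂ) ^ 3) (12 * π * (ρ : ℂ) ^ 2) ρ := by
    refine (((hasDerivAt_pow 3 (ρ : ℂ)).comp_ofReal).const_mul (4 * (π : ℂ))).congr_deriv ?_
    push_cast; ring
  refine ((hlin.mul (hasDerivAt_cexp_I_mul κ ρ)).div hden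
    (by simp [hρ, Real.pi_ne_zero])).congr_deriv ?_
  simp only [gradCoeffDeriv, Pi.mul_apply]
  field_simp
  ring_nf
  simp only [Complex.I_sq]
  ring

theorem I_mul_gradCoeff_sub_gradCoeffDeriv (κ ρ : ℝ) :
    Complex.I * κ * gradCoeff κ ρ - gradCoeffDeriv κ ρ
      = (2 * Complex.I * κ * ρ - 3) * cexp (Complex.I * κ * ρ) / (4 * π * ρ ^ 4) := by
  simp only [gradCoeff, gradCoeffDeriv]
  field_simp
  ring_nf
  simp only [Complex.I_sq]
  ring

theorem norm_mul_cexp_div_le (κ : ℝ) {ρ : ℝ} (hρ : 0 < ρ) (N : ℂ) (n : ℕ) :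
    ‖N * cexp (Complex.I * κ * ρ) / (4 * π * ρ ^ n)‖ ≤ ‖N‖ / ρ ^ n := by
  have hexp : ‖cexp (Complex.I * κ * ρ)‖ = 1 := by
    rw [Complex.norm_exp]; simp
  rw [norm_div, norm_mul, hexp, mul_one]
  gcongr
  simp only [norm_mul, norm_pow, Complex.norm_real, Real.norm_eq_abs, abs_of_pos hρ,
    abs_of_pos Real.pi_pos]
  norm_num
  nlinarith [pow_pos hρ n, Real.pi_gt_three]

theorem norm_gradCoeff_le (κ : ℝ) {ρ : ℝ} (hρ : 1 ≤ ρ) :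
    ‖gradCoeff κ ρ‖ ≤ (|κ| + 1) / ρ ^ 2 := by
  have hρ0 : 0 < ρ := one_pos.trans_le hρ
  have hN : ‖Complex.I * κ * ρ - 1‖ ≤ (|κ| + 1) * ρ := by
    refine (norm_sub_le _ _).trans ?_
    simp only [norm_mul, Complex.norm_I, Complex.norm_real, Real.norm_eq_abs, abs_of_pos hρ0]
    norm_num
    nlinarith
  calc ‖gradCoeff κ ρ‖ ≤ (|κ| + 1) * ρ / ρ ^ 3 :=
        (norm_mul_cexp_div_le κ hρ0 _ 3).trans (by gcongr)
    _ = (|κ| + 1) / ρ ^ 2 := by field_simp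

theorem norm_gradCoeffDeriv_le (κ : ℝ) {ρ : ℝ} (hρ : 1 ≤ ρ) :
    ‖gradCoeffDeriv κ ρ‖ ≤ (κ ^ 2 + 3 * |κ| + 3) / ρ ^ 2 := by
  have hρ0 : 0 < ρ := one_pos.trans_le hρ
  have hN : ‖-κ ^ 2 * ρ ^ 2 - 3 * Complex.I * κ * ρ + 3‖ ≤ (κ ^ 2 + 3 * |κ| + 3) * ρ ^ 2 := by
    refine (norm_add_le _ _).trans ?_
    refine (add_le_add_left (norm_sub_le _ _) _).trans ?_
    simp only [norm_neg, norm_mul, norm_pow, Complex.norm_I, Complex.norm_real, Real.norm_eq_abs,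
      abs_of_pos hρ0, sq_abs]
    norm_num
    have hρρ : ρ ≤ ρ ^ 2 := by nlinarith
    nlinarith [mul_le_mul_of_nonneg_left hρρ (abs_nonneg κ), one_le_pow₀ (n := 2) hρ]
  calc ‖gradCoeffDeriv κ ρ‖ ≤ (κ ^ 2 + 3 * |κ| + 3) * ρ ^ 2 / ρ ^ 4 :=
        (norm_mul_cexp_div_le κ hρ0 _ 4).trans (by gcongr)
    _ = (κ ^ 2 + 3 * |κ| + 3) / ρ ^ 2 := by field_simp

theorem norm_I_mul_gradCoeff_sub_gradCoeffDeriv_le (κ : ℝ) {ρ : ℝ} (hρ : 1 ≤ ρ) :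
    ‖Complex.I * κ * gradCoeff κ ρ - gradCoeffDeriv κ ρ‖ ≤ (2 * |κ| + 3) / ρ ^ 3 := by
  have hρ0 : 0 < ρ := one_pos.trans_le hρ
  have hN : ‖2 * Complex.I * κ * ρ - 3‖ ≤ (2 * |κ| + 3) * ρ := by
    refine (norm_sub_le _ _).trans ?_
    simp only [norm_mul, Complex.norm_I, Complex.norm_real, Real.norm_eq_abs, abs_of_pos hρ0]
    norm_num
    nlinarith
  rw [I_mul_gradCoeff_sub_gradCoeffDeriv κ ρ]
  calc _ ≤ (2 * |κ| + 3) * ρ / ρ ^ 4 := (norm_mul_cexp_div_le κ hρ0 _ 4).trans (by gcongr)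
    _ = (2 * |κ| + 3) / ρ ^ 3 := by field_simp

variable {E : Type*} [NormedAddCommGroup E] [InnerProductSpace ℝ E]

/-- `⟪p, ∇_y G(x, y)⟫`. -/
def dlKernel (κ : ℝ) (p x y : E) : ℂ := -(gradCoeff κ ‖x - y‖ * ⟪x - y, p⟫)

def dlKernelDeriv (κ : ℝ) (p x y : E) : E →L[ℝ] ℂ :=
  (innerSL ℝ (x - y)).smulRight (-(gradCoeffDeriv κ ‖x - y‖ / ‖x - y‖ * ⟪x - y, p⟫)) +
    (innerSL ℝ p).smulRight (-gradCoeff κ ‖x - y‖)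

theorem hasFDerivAt_dlKernel (κ : ℝ) (p : E) {x y : E} (hxy : x ≠ y) :
    HasFDerivAt (fun x' => dlKernel κ p x' y) (dlKernelDeriv κ p x y) x := by
  have hsub : x - y ≠ 0 := sub_ne_zero.2 hxy
  have hρ : HasFDerivAt (fun x' => ‖x' - y‖) (‖x - y‖⁻¹ • innerSL ℝ (x - y)) x :=
    ((hasFDerivAt_norm hsub).comp x (hasFDerivAt_sub_const y)).congr_fderiv
      (ContinuousLinearMap.comp_id _)
  have hq := (hasDerivAt_gradCoeff κ (norm_ne_zero_iff.2 hsub)).hasFDerivAt.comp x hρ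
  have hinner : HasFDerivAt (fun x' => ((⟪x' - y, p⟫ : ℝ) : ℂ))
      (Complex.ofRealCLM.comp ((innerSL ℝ p))) x := by
    have := (Complex.ofRealCLM.comp (innerSL ℝ p)).hasFDerivAt.comp x (hasFDerivAt_sub_const y)
    simpa [Function.comp_def, real_inner_comm p] using this
  refine (hq.mul hinner).neg.congr_fderiv ?_
  ext v
  simp only [Function.comp_apply, real_inner_comm p, map_sub, ContinuousLinearMap.comp_smulₛₗ,
    map_inv₀, ringHom_apply, ContinuousLinearMap.comp_sub, neg_add_rev, add_apply, neg_apply,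
    smul_apply, sub_apply, ContinuousLinearMap.comp_apply, coe_innerSL_apply,
    ContinuousLinearMap.toSpanSingleton_apply, Complex.real_smul, Complex.ofReal_inv, smul_eq_mul,
    Complex.ofRealCLM_apply, dlKernelDeriv, ContinuousLinearMap.smulRight_apply, smul_neg,
    Complex.ofReal_sub]
  ring

theorem fderiv_helmholtzG_apply (κ : ℝ) {x y : EuclideanSpace ℝ (Fin 3)} (hxy : x ≠ y)
    (p : EuclideanSpace ℝ (Fin 3)) :
    fderiv ℝ (helmholtzG κ x) y p = dlKernel κ p x y := by
  have hsub : x - y ≠ 0 := sub_ne_zero.2 hxy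
  have hρ : HasFDerivAt (fun z => ‖x - z‖)
      (‖x - y‖⁻¹ • innerSL ℝ (x - y) ∘L (-ContinuousLinearMap.id ℝ _)) y :=
    (hasFDerivAt_norm hsub).comp y ((hasFDerivAt_id y).const_sub x)
  have hG := (hasDerivAt_profile κ (norm_ne_zero_iff.2 hsub)).hasFDerivAt.comp y hρ
  rw [show helmholtzG κ x = profile κ ∘ fun z => ‖x - z‖ from rfl, hG.fderiv]
  have hρ0 : (‖x - y‖ : ℂ) ≠ 0 := by simpa using hsub
  simp only [map_sub, ContinuousLinearMap.comp_neg, ContinuousLinearMap.comp_id, neg_sub,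
    ContinuousLinearMap.comp_smulₛₗ, map_inv₀, ringHom_apply, ContinuousLinearMap.comp_sub,
    smul_apply, sub_apply, ContinuousLinearMap.comp_apply, coe_innerSL_apply,
    ContinuousLinearMap.toSpanSingleton_apply, Complex.real_smul, Complex.ofReal_inv, dlKernel,
    inner_sub_left, Complex.ofReal_sub]
  field_simp
  ring

theorem norm_dlKernel_le (κ : ℝ) (p : E) {x y : E} (hρ : 1 ≤ ‖x - y‖) :
    ‖dlKernel κ p x y‖ ≤ (|κ| + 1) * ‖p‖ := by
  have hρ0 : 0 < ‖x - y‖ := one_pos.trans_le hρ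
  calc ‖dlKernel κ p x y‖ = ‖gradCoeff κ ‖x - y‖‖ * |⟪x - y, p⟫| := by
        simp [dlKernel]
    _ ≤ (|κ| + 1) / ‖x - y‖ ^ 2 * (‖x - y‖ * ‖p‖) := by
        gcongr
        · exact norm_gradCoeff_le κ hρ
        · exact abs_real_inner_le_norm _ _
    _ = (|κ| + 1) * ‖p‖ / ‖x - y‖ := by field_simp
    _ ≤ (|κ| + 1) * ‖p‖ := div_le_self (by positivity) hρ

theorem norm_dlKernelDeriv_le (κ : ℝ) (p : E) {x y : E} (hρ : 1 ≤ ‖x - y‖) :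
    ‖dlKernelDeriv κ p x y‖ ≤ (|κ| + 2) ^ 2 * ‖p‖ := by
  have hρ0 : 0 < ‖x - y‖ := one_pos.trans_le hρ
  have h1 : ‖(innerSL ℝ (x - y)).smulRight
      (-(gradCoeffDeriv κ ‖x - y‖ / ‖x - y‖ * ⟪x - y, p⟫))‖ ≤ (κ ^ 2 + 3 * |κ| + 3) * ‖p‖ := by
    rw [ContinuousLinearMap.norm_smulRight_apply, innerSL_apply_norm]
    calc ‖x - y‖ * ‖-(gradCoeffDeriv κ ‖x - y‖ / ‖x - y‖ * ⟪x - y, p⟫)‖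
        = ‖gradCoeffDeriv κ ‖x - y‖‖ * |⟪x - y, p⟫| := by
          simp only [norm_neg, Complex.norm_mul, Complex.norm_div, Complex.norm_real,
            Real.norm_eq_abs, abs_norm]
          field_simp
      _ ≤ (κ ^ 2 + 3 * |κ| + 3) / ‖x - y‖ ^ 2 * (‖x - y‖ * ‖p‖) := by
          gcongr
          · exact norm_gradCoeffDeriv_le κ hρ
          · exact abs_real_inner_le_norm _ _
      _ = (κ ^ 2 + 3 * |κ| + 3) * ‖p‖ / ‖x - y‖ := by field_simp
      _ ≤ (κ ^ 2 + 3 * |κ| + 3) * ‖p‖ := div_le_self (by positivity) hρ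
  have h2 : ‖(innerSL ℝ p).smulRight (-gradCoeff κ ‖x - y‖)‖ ≤ (|κ| + 1) * ‖p‖ := by
    rw [ContinuousLinearMap.norm_smulRight_apply, innerSL_apply_norm, norm_neg, mul_comm]
    gcongr
    calc ‖gradCoeff κ ‖x - y‖‖ ≤ (|κ| + 1) / ‖x - y‖ ^ 2 := norm_gradCoeff_le κ hρ
      _ ≤ |κ| + 1 := div_le_self (by positivity) (one_le_pow₀ hρ)
  calc ‖dlKernelDeriv κ p x y‖ ≤ (κ ^ 2 + 3 * |κ| + 3) * ‖p‖ + (|κ| + 1) * ‖p‖ :=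
        (norm_add_le _ _).trans (add_le_add h1 h2)
    _ = (|κ| + 2) ^ 2 * ‖p‖ := by rw [← sq_abs κ]; ring

theorem dlKernelDeriv_apply_sub_I_mul_dlKernel (κ : ℝ) (p : E) {x y : E} (hxy : x ≠ y)
    (v : E) :
    dlKernelDeriv κ p x y v - Complex.I * κ * dlKernel κ p x y =
      ⟪x - y, p⟫ * (Complex.I * κ * gradCoeff κ ‖x - y‖ - gradCoeffDeriv κ ‖x - y‖) +
        ⟪x - y, p⟫ * gradCoeffDeriv κ ‖x - y‖ * ((‖x - y‖ - ⟪x - y, v⟫) / ‖x - y‖ : ℝ) -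
          gradCoeff κ ‖x - y‖ * ⟪p, v⟫ := by
  have hρ : (‖x - y‖ : ℂ) ≠ 0 := by simpa [sub_eq_zero] using hxy
  simp only [dlKernelDeriv, dlKernel, add_apply,
    ContinuousLinearMap.smulRight_apply, innerSL_apply_apply, Complex.real_smul,
    Complex.ofReal_div, Complex.ofReal_sub]
  field_simp
  ring

theorem norm_dlKernelDeriv_apply_sub_le (κ : ℝ) (p : E) {x y v : E} (hv : ‖v‖ ≤ 1)
    (hρ : 1 ≤ ‖x - y‖) {d : ℝ} (hd : ‖x - y‖ * (‖x - y‖ - ⟪x - y, v⟫) ≤ d) :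
    ‖dlKernelDeriv κ p x y v - Complex.I * κ * dlKernel κ p x y‖ ≤
      (3 * |κ| + 4 + (κ ^ 2 + 3 * |κ| + 3) * d) * ‖p‖ / ‖x - y‖ ^ 2 := by
  have hxy : x ≠ y := sub_ne_zero.1 (norm_pos_iff.1 (one_pos.trans_le hρ))
  rw [dlKernelDeriv_apply_sub_I_mul_dlKernel κ p hxy v]
  set ρ := ‖x - y‖
  have hρ0 : 0 < ρ := one_pos.trans_le hρ
  have ha : ‖((⟪x - y, p⟫ : ℝ) : ℂ)‖ ≤ ρ * ‖p‖ := by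
    simpa using abs_real_inner_le_norm (x - y) p
  have hs : 0 ≤ ρ - ⟪x - y, v⟫ := by
    have := real_inner_le_norm (x - y) v
    nlinarith [norm_nonneg (x - y)]
  have hδ : ‖(((ρ - ⟪x - y, v⟫) / ρ : ℝ) : ℂ)‖ ≤ d / ρ ^ 2 := by
    rw [Complex.norm_real, Real.norm_of_nonneg (by positivity), le_div_iff₀ (by positivity)]
    calc (ρ - ⟪x - y, v⟫) / ρ * ρ ^ 2 = ρ * (ρ - ⟪x - y, v⟫) := by field_simp
      _ ≤ d := hd
  have hd0 : 0 ≤ d := le_trans (by positivity) hd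
  have hpv : ‖((⟪p, v⟫ : ℝ) : ℂ)‖ ≤ ‖p‖ := by
    simpa using (abs_real_inner_le_norm p v).trans (mul_le_of_le_one_right (norm_nonneg p) hv)
  refine (norm_sub_le _ _).trans ((add_le_add (norm_add_le _ _) le_rfl).trans ?_)
  simp only [norm_mul]
  have h1 := mul_le_mul ha (norm_I_mul_gradCoeff_sub_gradCoeffDeriv_le κ hρ) (norm_nonneg _)
    (by positivity)
  have h2 := mul_le_mul (mul_le_mul ha (norm_gradCoeffDeriv_le κ hρ) (norm_nonneg _)
    (by positivity)) hδ (norm_nonneg _) (by positivity)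
  have h3 := mul_le_mul (norm_gradCoeff_le κ hρ) hpv (norm_nonneg _) (by positivity)
  calc _ ≤ ρ * ‖p‖ * ((2 * |κ| + 3) / ρ ^ 3) +
        ρ * ‖p‖ * ((κ ^ 2 + 3 * |κ| + 3) / ρ ^ 2) * (d / ρ ^ 2) + (|κ| + 1) / ρ ^ 2 * ‖p‖ :=
        add_le_add (add_le_add h1 h2) h3
    _ = (3 * |κ| + 4 + (κ ^ 2 + 3 * |κ| + 3) * d / ρ) * ‖p‖ / ρ ^ 2 := by
        field_simp
        ring
    _ ≤ _ := by
        gcongr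
        exact div_le_self (by positivity) hρ

theorem norm_dlKernelDeriv_radial_sub_le (κ : ℝ) (p : E) {x y : E} (hyx : ‖y‖ ≤ ‖x‖)
    (hρ : 1 ≤ ‖x - y‖) :
    ‖dlKernelDeriv κ p x y (‖x‖⁻¹ • x) - Complex.I * κ * dlKernel κ p x y‖ ≤
      (3 * |κ| + 4 + (κ ^ 2 + 3 * |κ| + 3) * ‖y‖ ^ 2) * ‖p‖ / ‖x - y‖ ^ 2 := by
  refine norm_dlKernelDeriv_apply_sub_le κ p ?_ hρ (norm_sub_mul_sub_inner_le_sq hyx)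
  rw [norm_smul, norm_inv, norm_norm]
  exact inv_mul_le_one_of_le₀ le_rfl (norm_nonneg x)

section Integral

variable [MeasurableSpace E] [BorelSpace E] [SecondCountableTopology E]

def doubleLayer (κ : ℝ) (μ : Measure E) (w : E → E) (x : E) : ℂ :=
  ∫ y, dlKernel κ (w y) x y ∂μ

variable {μ : Measure E} [IsFiniteMeasure μ] {w : E → E} {C R : ℝ}

theorem measurable_dlKernel (κ : ℝ) (hw : Measurable w) (x : E) :
    Measurable fun y => dlKernel κ (w y) x y := by
  unfold dlKernel gradCoeff; fun_prop

theorem stronglyMeasurable_dlKernelDeriv (κ : ℝ) (hw : Measurable w) (x : E) :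
    StronglyMeasurable fun y => dlKernelDeriv κ (w y) x y := by
  have hF : Continuous fun q : E × E × ℂ × ℂ =>
      (innerSL ℝ q.1).smulRight q.2.2.1 + (innerSL ℝ q.2.1).smulRight q.2.2.2 := by
    fun_prop
  have hg : Measurable fun y => (x - y, w y,
      -(gradCoeffDeriv κ ‖x - y‖ / ‖x - y‖ * ⟪x - y, w y⟫), -gradCoeff κ ‖x - y‖) := by
    unfold gradCoeff gradCoeffDeriv; fun_prop
  simpa only [dlKernelDeriv] using hF.comp_stronglyMeasurable hg.stronglyMeasurable

theorem integrable_dlKernel (κ : ℝ) (hw : Measurable w) (hC : ∀ y, ‖w y‖ ≤ C)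
    (hR : ∀ᵐ y ∂μ, ‖y‖ ≤ R) {x : E} (hx : R + 1 ≤ ‖x‖) :
    Integrable (fun y => dlKernel κ (w y) x y) μ := by
  refine .of_bound (measurable_dlKernel κ hw x).aestronglyMeasurable ((|κ| + 1) * C) ?_
  filter_upwards [hR] with y hy
  exact (norm_dlKernel_le κ _ (le_norm_sub_of_norm_le hy hx)).trans (by gcongr; exact hC y)

theorem integrable_dlKernelDeriv (κ : ℝ) (hw : Measurable w) (hC : ∀ y, ‖w y‖ ≤ C)
    (hR : ∀ᵐ y ∂μ, ‖y‖ ≤ R) {x : E} (hx : R + 1 ≤ ‖x‖) :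
    Integrable (fun y => dlKernelDeriv κ (w y) x y) μ := by
  refine .of_bound (stronglyMeasurable_dlKernelDeriv κ hw x).aestronglyMeasurable
    ((|κ| + 2) ^ 2 * C) ?_
  filter_upwards [hR] with y hy
  exact (norm_dlKernelDeriv_le κ _ (le_norm_sub_of_norm_le hy hx)).trans (by gcongr; exact hC y)

theorem hasFDerivAt_doubleLayer (κ : ℝ) (hw : Measurable w) (hC : ∀ y, ‖w y‖ ≤ C)
    (hR : ∀ᵐ y ∂μ, ‖y‖ ≤ R) {x : E} (hx : R + 1 < ‖x‖) :
    HasFDerivAt (doubleLayer κ μ w) (∫ y, dlKernelDeriv κ (w y) x y ∂μ) x := by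
  have hU : {x' : E | R + 1 < ‖x'‖} ∈ 𝓝 x :=
    (isOpen_lt continuous_const continuous_norm).mem_nhds hx
  refine hasFDerivAt_integral_of_dominated_of_fderiv_le (F := fun x' y => dlKernel κ (w y) x' y)
    (F' := fun x' y => dlKernelDeriv κ (w y) x' y) (bound := fun _ => (|κ| + 2) ^ 2 * C) hU
    (Eventually.of_forall fun x' => (measurable_dlKernel κ hw x').aestronglyMeasurable)
    (integrable_dlKernel κ hw hC hR hx.le)
    (stronglyMeasurable_dlKernelDeriv κ hw x).aestronglyMeasurable ?_ (integrable_const _) ?_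
  · filter_upwards [hR] with y hy x' hx'
    exact (norm_dlKernelDeriv_le κ _ (le_norm_sub_of_norm_le hy hx'.le)).trans
      (by gcongr; exact hC y)
  · filter_upwards [hR] with y hy x' hx'
    have hρ : 1 ≤ ‖x' - y‖ := le_norm_sub_of_norm_le hy hx'.le
    exact hasFDerivAt_dlKernel κ (w y) (by rintro rfl; norm_num at hρ)

theorem norm_mul_radiation_doubleLayer_le (κ : ℝ) (hw : Measurable w) (hC : ∀ y, ‖w y‖ ≤ C)
    (hR0 : 0 ≤ R) (hR : ∀ᵐ y ∂μ, ‖y‖ ≤ R) {x : E} (hx : 2 * R + 2 ≤ ‖x‖) :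
    ‖(‖x‖ : ℂ) * (fderiv ℝ (doubleLayer κ μ w) x (‖x‖⁻¹ • x) -
        Complex.I * κ * doubleLayer κ μ w x)‖ ≤
      4 * (3 * |κ| + 4 + (κ ^ 2 + 3 * |κ| + 3) * R ^ 2) * C * μ.real Set.univ / ‖x‖ := by
  have hx0 : 0 < ‖x‖ := by linarith
  have hF := integrable_dlKernel κ hw hC hR (by linarith : R + 1 ≤ ‖x‖)
  have hF' := integrable_dlKernelDeriv κ hw hC hR (by linarith : R + 1 ≤ ‖x‖)
  have hsplit : fderiv ℝ (doubleLayer κ μ w) x (‖x‖⁻¹ • x) - Complex.I * κ * doubleLayer κ μ w x =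
      ∫ y, (dlKernelDeriv κ (w y) x y (‖x‖⁻¹ • x) - Complex.I * κ * dlKernel κ (w y) x y) ∂μ := by
    rw [(hasFDerivAt_doubleLayer κ hw hC hR (by linarith)).fderiv,
      ContinuousLinearMap.integral_apply hF', doubleLayer, ← integral_const_mul,
      integral_sub (hF'.apply_continuousLinearMap _) (hF.const_mul _)]
  have hbound : ∀ᵐ y ∂μ, ‖dlKernelDeriv κ (w y) x y (‖x‖⁻¹ • x) -
      Complex.I * κ * dlKernel κ (w y) x y‖ ≤
        4 * (3 * |κ| + 4 + (κ ^ 2 + 3 * |κ| + 3) * R ^ 2) * C / ‖x‖ ^ 2 := by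
    filter_upwards [hR] with y hy
    have hρ : ‖x‖ / 2 ≤ ‖x - y‖ := le_norm_sub_of_norm_le hy (by linarith)
    calc _ ≤ (3 * |κ| + 4 + (κ ^ 2 + 3 * |κ| + 3) * ‖y‖ ^ 2) * ‖w y‖ / ‖x - y‖ ^ 2 :=
          norm_dlKernelDeriv_radial_sub_le κ (w y) (by linarith)
            (le_norm_sub_of_norm_le hy (by linarith))
      _ ≤ (3 * |κ| + 4 + (κ ^ 2 + 3 * |κ| + 3) * R ^ 2) * C / (‖x‖ / 2) ^ 2 := by
          have := (norm_nonneg _).trans (hC y)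
          gcongr
          exact hC y
      _ = 4 * (3 * |κ| + 4 + (κ ^ 2 + 3 * |κ| + 3) * R ^ 2) * C / ‖x‖ ^ 2 := by
          field_simp
          ring
  rw [hsplit, norm_mul, Complex.norm_real, Real.norm_of_nonneg hx0.le]
  calc ‖x‖ * ‖∫ y, _ ∂μ‖ ≤ ‖x‖ * (4 * (3 * |κ| + 4 + (κ ^ 2 + 3 * |κ| + 3) * R ^ 2) * C /
        ‖x‖ ^ 2 * μ.real Set.univ) := by
        gcongr
        exact norm_integral_le_of_norm_le_const hbound
    _ = _ := by
        field_simp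

end Integral

end Helmholtz

end

theorem doubleLayerPotential_sommerfeld (κ : ℝ)
    (μ : Measure (EuclideanSpace ℝ (Fin 3))) [IsFiniteMeasure μ]
    (K : Set (EuclideanSpace ℝ (Fin 3))) (hK : IsCompact K) (hsupp : μ Kᶜ = 0)
    (w : EuclideanSpace ℝ (Fin 3) → EuclideanSpace ℝ (Fin 3))
    (hw_meas : Measurable w) (hw_bdd : ∃ C : ℝ, ∀ y, ‖w y‖ ≤ C)
    (u : EuclideanSpace ℝ (Fin 3) → ℂ)
    (hu : ∀ x, u x = ∫ y, fderiv ℝ (fun z => helmholtzG κ x z) y (w y) ∂μ) :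
    Filter.Tendsto
      (fun x : EuclideanSpace ℝ (Fin 3) =>
        (‖x‖ : ℂ) * (fderiv ℝ u x (‖x‖⁻¹ • x) - Complex.I * (κ : ℂ) * u x))
      (Filter.comap (fun x : EuclideanSpace ℝ (Fin 3) => ‖x‖) Filter.atTop) (nhds 0) := by
  obtain ⟨C, hC⟩ := hw_bdd
  obtain ⟨R, hR0, hKR⟩ := hK.isBounded.subset_closedBall_lt 0 0
  have hR : ∀ᵐ y ∂μ, ‖y‖ ≤ R := ae_iff.2 <|
    measure_mono_null (fun y hy hyK => hy (mem_closedBall_zero_iff.1 (hKR hyK))) hsupp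
  have hu_eq : ∀ x, R + 1 < ‖x‖ → u x = Helmholtz.doubleLayer κ μ w x := fun x hx => by
    rw [hu x]
    refine integral_congr_ae ?_
    filter_upwards [hR] with y hy
    exact Helmholtz.fderiv_helmholtzG_apply κ (by rintro rfl; linarith) (w y)
  set c := 4 * (3 * |κ| + 4 + (κ ^ 2 + 3 * |κ| + 3) * R ^ 2) * C * μ.real Set.univ
  have hbound : ∀ᶠ x in comap (fun x => ‖x‖) atTop,
      ‖(‖x‖ : ℂ) * (fderiv ℝ u x (‖x‖⁻¹ • x) - Complex.I * κ * u x)‖ ≤ c / ‖x‖ := by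
    filter_upwards [tendsto_comap.eventually (eventually_ge_atTop (2 * R + 2))] with x hx
    have hloc : u =ᶠ[𝓝 x] Helmholtz.doubleLayer κ μ w := by
      filter_upwards [(isOpen_lt continuous_const continuous_norm).mem_nhds
        (show R + 1 < ‖x‖ by linarith)] with x' hx' using hu_eq x' hx'
    rw [hloc.fderiv_eq, hloc.eq_of_nhds]
    exact Helmholtz.norm_mul_radiation_doubleLayer_le κ hw_meas hC hR0.le hR hx
  exact squeeze_zero_norm' hbound (tendsto_const_nhds.div_atTop tendsto_comap)
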